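/- Let t ≥ 1, d ≥ 1 and 2 ≤ v_1 ≤ v_2 ≤ ⋯ ≤ v_{t+1} with d < v_1, and set N = (d+1)·v_2·v_3⋯v_{t+1}. An N×(t+1) array A of type (v_1,…,v_{t+1}) is a (d,t)-DTA(N; t+1, (v_1,…,v_{t+1})) of optimum size meeting the lower bound N = (d+1)·∏_{i=2}^{t+1} v_i if and only if A is a super-simple MCA_{d+1}(N; t, t+1, (v_1,…,v_{t+1})) of optimum size N = (d+1)·∏_{i=2}^{t+1} v_i. -/

import Mathlib

/-- An array `A` (rows indexed by `R`, columns by `J`) is of type `v` if every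
entry in column `j` lies in `Z_{v j} = {0, 1, …, v j - 1}`. -/
def IsArray {R J : Type*} (v : J → ℕ) (A : R → J → ℕ) : Prop :=
  ∀ r j, A r j < v j

/-- An `s`-way interaction: a set of `s` pairs `(j, σ)` with pairwise distinct
column indices `j` and value `σ ∈ Z_{v j}`. -/
def IsInteraction {J : Type*} [DecidableEq J] (v : J → ℕ) (s : ℕ)
    (T : Finset (J × ℕ)) : Prop :=
  T.card = s ∧ (T.image Prod.fst).card = s ∧ ∀ p ∈ T, p.2 < v p.1

/-- `rho A T`: the set of rows of `A` in which the interaction `T` is covered. -/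
def rho {R J : Type*} [Fintype R] (A : R → J → ℕ) (T : Finset (J × ℕ)) :
    Finset R :=
  Finset.univ.filter fun r => ∀ p ∈ T, A r p.1 = p.2

/-- `rhoSet A 𝒯 = ⋃_{T ∈ 𝒯} rho A T`. -/
def rhoSet {R J : Type*} [Fintype R] [DecidableEq R] (A : R → J → ℕ)
    (Ts : Finset (Finset (J × ℕ))) : Finset R :=
  Ts.sup (rho A)

/-- A `(d,t)`-detecting array of type `v`: for every `t`-way interaction `T` and
every set `𝒯` of exactly `d` `t`-way interactions,
`ρ(A,T) ⊆ ρ(A,𝒯) ↔ T ∈ 𝒯`. -/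
def IsDTA {R J : Type*} [Fintype R] [DecidableEq R] [DecidableEq J] (v : J → ℕ) (d t : ℕ)
    (A : R → J → ℕ) : Prop :=
  IsArray v A ∧
    ∀ T : Finset (J × ℕ), IsInteraction v t T →
      ∀ Ts : Finset (Finset (J × ℕ)), Ts.card = d →
        (∀ T' ∈ Ts, IsInteraction v t T') →
          (rho A T ⊆ rhoSet A Ts ↔ T ∈ Ts)

/-- A mixed covering array `MCA_λ(N; t, k, v)`: an array of type `v` such that
`|ρ(A,T)| ≥ λ` for every `t`-way interaction `T`. -/
def IsMCA {R J : Type*} [Fintype R] [DecidableEq J] (v : J → ℕ) (lam t : ℕ)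
    (A : R → J → ℕ) : Prop :=
  IsArray v A ∧ ∀ T : Finset (J × ℕ), IsInteraction v t T → lam ≤ (rho A T).card

/-- Super-simple of strength `t`: every `(t+1)`-way interaction is covered by at
most one row. -/
def IsSuperSimple {R J : Type*} [Fintype R] [DecidableEq J] (v : J → ℕ) (t : ℕ)
    (A : R → J → ℕ) : Prop :=
  ∀ T : Finset (J × ℕ), IsInteraction v (t + 1) T → (rho A T).card ≤ 1

/-- An orthogonal array `OA_λ(t, k, v)`: all entries in `Z_v` and
`|ρ(A,T)| = λ` for every `t`-way interaction `T`. (The size requirement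
`N = λ·v^t` is imposed on the row-index type in the statements.) -/
def IsOA {R J : Type*} [Fintype R] [DecidableEq J] (vlev lam t : ℕ)
    (A : R → J → ℕ) : Prop :=
  IsArray (fun _ : J => vlev) A ∧
    ∀ T : Finset (J × ℕ), IsInteraction (fun _ : J => vlev) t T →
      (rho A T).card = lam

/-- `Te` is an extension of the interaction `T`: it is obtained from `T` by
adjoining one pair `(j, σ)` with `σ ∈ Z_{v j}` whose column index `j` occurs in
no pair of `T`. -/
def IsExtension {J : Type*} [DecidableEq J] (v : J → ℕ)
    (T Te : Finset (J × ℕ)) : Prop :=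
  ∃ p : J × ℕ, p.2 < v p.1 ∧ (∀ q ∈ T, q.1 ≠ p.1) ∧ Te = insert p T

/-- `A` is `d`-extendible (with respect to strength `t`): for every `t`-way
interaction `T` and every list of `d` extensions `T_1, …, T_d` of `T`
(repetitions allowed), `ρ(A,T) \ (ρ(A,T_1) ∪ ⋯ ∪ ρ(A,T_d))` is nonempty. -/
def IsExtendible {R J : Type*} [Fintype R] [DecidableEq J] (v : J → ℕ)
    (d t : ℕ) (A : R → J → ℕ) : Prop :=
  ∀ T : Finset (J × ℕ), IsInteraction v t T →
    ∀ Te : Fin d → Finset (J × ℕ), (∀ i, IsExtension v T (Te i)) →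
      ∃ r ∈ rho A T, ∀ i, r ∉ rho A (Te i)

/-! If `A` is super-simple, two distinct `t`-way interactions share at most one row (their
union fixes at least `t + 1` columns), so `d` interactions cover at most `d` of the `≥ d + 1`
rows of any other one: `A` is detecting.

Conversely, let `A` be detecting and `T` a `t`-way interaction missing column `c`. If the rows
of `ρ(A,T)` showed at most `d` values in column `c`, trading one pair of `T` for `(c, σ)`, for
`d` values `σ` including those, would give `d` interactions whose rows cover `ρ(A,T)`. So these
rows show at least `d + 1` values; in particular `A` is an `MCA_{d+1}`. Partitioning the `N`
rows by their entries outside column `c` into `∏_{j ≠ c} v j` classes of size `≥ d + 1`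
forces every class to have exactly `d + 1` rows, which therefore have pairwise distinct
entries in column `c`: this is super-simplicity. -/

open Finset

section Rows

variable {R J : Type*} [Fintype R] {A : R → J → ℕ}

@[simp]
lemma mem_rho {T : Finset (J × ℕ)} {r : R} : r ∈ rho A T ↔ ∀ p ∈ T, A r p.1 = p.2 := by
  simp [rho]

lemma rho_anti {T T' : Finset (J × ℕ)} (h : T ⊆ T') : rho A T' ⊆ rho A T :=
  fun _ hr => mem_rho.2 fun p hp => mem_rho.1 hr p (h hp)

lemma rho_union [DecidableEq R] [DecidableEq J] (T T' : Finset (J × ℕ)) :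
    rho A (T ∪ T') = rho A T ∩ rho A T' := by
  ext r
  simp only [mem_rho, mem_union, mem_inter, or_imp, forall_and]

lemma mem_rhoSet [DecidableEq R] {Ts : Finset (Finset (J × ℕ))} {r : R} :
    r ∈ rhoSet A Ts ↔ ∃ T ∈ Ts, r ∈ rho A T := by
  simp only [rhoSet, mem_sup]

lemma injOn_fst_of_mem_rho {T : Finset (J × ℕ)} {r : R} (hr : r ∈ rho A T) :
    Set.InjOn Prod.fst (T : Set (J × ℕ)) :=
  fun p hp q hq h => Prod.ext h (by rw [← mem_rho.1 hr p hp, ← mem_rho.1 hr q hq, h])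

lemma card_rho_insert_le_one [DecidableEq J] {T : Finset (J × ℕ)} {p : J × ℕ}
    (hinj : Set.InjOn (fun r => A r p.1) (rho A T)) :
    #(rho A (insert p T)) ≤ 1 := by
  refine card_le_one.2 fun r hr r' hr' => hinj (rho_anti (subset_insert _ _) hr)
    (rho_anti (subset_insert _ _) hr') ?_
  rw [mem_rho, forall_mem_insert] at hr hr'
  exact hr.1.trans hr'.1.symm

end Rows

section Interactions

variable {J : Type*} [DecidableEq J] {v : J → ℕ} {s : ℕ} {T : Finset (J × ℕ)}

lemma isInteraction_card_iff :
    IsInteraction v #T T ↔ Set.InjOn Prod.fst (T : Set (J × ℕ)) ∧ ∀ p ∈ T, p.2 < v p.1 := by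
  simp [IsInteraction, card_image_iff]

lemma IsInteraction.injOn (hT : IsInteraction v s T) : Set.InjOn Prod.fst (T : Set (J × ℕ)) :=
  card_image_iff.1 (hT.2.1.trans hT.1.symm)

lemma IsInteraction.erase (hT : IsInteraction v (s + 1) T) {p : J × ℕ} (hp : p ∈ T) :
    IsInteraction v s (T.erase p) := by
  have hcard : #(T.erase p) = s := by rw [card_erase_of_mem hp, hT.1, Nat.add_sub_cancel]
  rw [← hcard, isInteraction_card_iff]
  exact ⟨hT.injOn.mono (by simp), fun q hq => hT.2.2 q (mem_of_mem_erase hq)⟩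

lemma IsInteraction.insert (hT : IsInteraction v s T) {c : J} (hc : ∀ q ∈ T, q.1 ≠ c) {σ : ℕ}
    (hσ : σ < v c) : IsInteraction v (s + 1) (insert (c, σ) T) := by
  have hnotMem : (c, σ) ∉ T := fun h => hc _ h rfl
  rw [← hT.1, ← card_insert_of_notMem hnotMem, isInteraction_card_iff, coe_insert,
    Set.injOn_insert (by exact_mod_cast hnotMem)]
  refine ⟨⟨hT.injOn, fun ⟨q, hq, hqc⟩ => hc q hq hqc⟩, ?_⟩
  simp only [mem_insert, forall_eq_or_imp]
  exact ⟨hσ, hT.2.2⟩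

lemma isInteraction_of_mem_rho {R : Type*} [Fintype R] {A : R → J → ℕ} (hA : IsArray v A)
    {r : R} (hr : r ∈ rho A T) : IsInteraction v #T T :=
  isInteraction_card_iff.2 ⟨injOn_fst_of_mem_rho hr, fun p hp => mem_rho.1 hr p hp ▸ hA r p.1⟩

end Interactions

section SuperSimple

variable {R J : Type*} [Fintype R] [DecidableEq J] {v : J → ℕ} {t : ℕ} {A : R → J → ℕ}

lemma IsSuperSimple.card_rho_le_one_of_lt_card (hss : IsSuperSimple v t A) (hA : IsArray v A)
    {U : Finset (J × ℕ)} (hU : t < #U) : #(rho A U) ≤ 1 := by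
  obtain h | ⟨r, hr⟩ := (rho A U).eq_empty_or_nonempty
  · simp [h]
  obtain ⟨S, hSU, hS⟩ := exists_subset_card_eq (n := t + 1) hU
  calc #(rho A U) ≤ #(rho A S) := card_le_card (rho_anti hSU)
    _ ≤ 1 := hss S (hS ▸ isInteraction_of_mem_rho hA (rho_anti hSU hr))

lemma IsSuperSimple.card_rho_inter_le_one [DecidableEq R] (hss : IsSuperSimple v t A)
    (hA : IsArray v A) {T T' : Finset (J × ℕ)} (hT : IsInteraction v t T)
    (hT' : IsInteraction v t T') (hne : T ≠ T') : #(rho A T ∩ rho A T') ≤ 1 := by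
  rw [← rho_union]
  refine hss.card_rho_le_one_of_lt_card hA ?_
  by_contra! h
  have hT_eq : T = T ∪ T' := eq_of_subset_of_card_le subset_union_left (hT.1 ▸ h)
  have hT'_eq : T' = T ∪ T' := eq_of_subset_of_card_le subset_union_right (hT'.1 ▸ h)
  exact hne (hT_eq.trans hT'_eq.symm)

theorem IsSuperSimple.isDTA [DecidableEq R] {d : ℕ} (hss : IsSuperSimple v t A)
    (hmca : IsMCA v (d + 1) t A) : IsDTA v d t A := by
  refine ⟨hmca.1, fun T hT Ts hTs hTs_int =>
    ⟨fun hsub => ?_, fun hmem r hr => mem_rhoSet.2 ⟨T, hmem, hr⟩⟩⟩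
  by_contra hT_notMem
  have hcover : rho A T ⊆ Ts.biUnion fun T' => rho A T ∩ rho A T' := fun r hr => by
    obtain ⟨T', hT', hrT'⟩ := mem_rhoSet.1 (hsub hr)
    exact mem_biUnion.2 ⟨T', hT', mem_inter.2 ⟨hr, hrT'⟩⟩
  have hle : #(rho A T) ≤ d := calc
    #(rho A T) ≤ #(Ts.biUnion fun T' => rho A T ∩ rho A T') := card_le_card hcover
    _ ≤ ∑ T' ∈ Ts, #(rho A T ∩ rho A T') := card_biUnion_le
    _ ≤ ∑ _T' ∈ Ts, 1 := sum_le_sum fun T' hT' =>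
        hss.card_rho_inter_le_one hmca.1 hT (hTs_int T' hT') fun h => hT_notMem (h ▸ hT')
    _ = d := by simp [hTs]
  have := hmca.2 T hT
  omega

end SuperSimple

section Counting

variable {R J : Type*} [Fintype R] [DecidableEq J] {v : J → ℕ} {A : R → J → ℕ} {B : Finset J}

lemma mem_rho_graph {f : B → ℕ} {r : R} :
    r ∈ rho A (univ.image fun j : B => ((j : J), f j)) ↔ (fun j : B => A r j) = f := by
  simp only [mem_rho, forall_mem_image, mem_univ, true_implies, funext_iff]

lemma isInteraction_graph {f : B → ℕ} (hf : ∀ j, f j < v j) :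
    IsInteraction v #B (univ.image fun j : B => ((j : J), f j)) := by
  have hinj : Function.Injective fun j : B => ((j : J), f j) :=
    fun i j h => Subtype.ext (Prod.ext_iff.1 h).1
  have hcard : #(univ.image fun j : B => ((j : J), f j)) = #B := by
    rw [card_image_of_injective _ hinj, card_univ, Fintype.card_coe]
  rw [← hcard, isInteraction_card_iff, coe_image, coe_univ, Set.image_univ]
  refine ⟨?_, by simpa only [forall_mem_image, mem_univ, true_implies] using hf⟩
  rintro _ ⟨i, rfl⟩ _ ⟨j, rfl⟩ h
  obtain rfl : i = j := Subtype.ext h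
  rfl

theorem IsMCA.card_rho_le_of_subset_image_fst {d : ℕ} (hA : IsMCA v (d + 1) #B A)
    (hR : Fintype.card R = (d + 1) * ∏ j ∈ B, v j) {T : Finset (J × ℕ)}
    (hTB : B ⊆ T.image Prod.fst) : #(rho A T) ≤ d + 1 := by
  obtain h | ⟨r₀, hr₀⟩ := (rho A T).eq_empty_or_nonempty
  · simp [h]
  set pattern : R → B → ℕ := fun r j => A r j
  set patterns := Fintype.piFinset fun j : B => range (v j)
  have hpattern : ∀ r, pattern r ∈ patterns :=
    fun r => Fintype.mem_piFinset.2 fun j => mem_range.2 (hA.1 r j)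
  have hfiber_ge : ∀ f ∈ patterns, d + 1 ≤ #{r | pattern r = f} := fun f hf => by
    have := hA.2 _ (isInteraction_graph fun j => mem_range.1 (Fintype.mem_piFinset.1 hf j))
    convert this using 2
    ext r
    rw [mem_filter, mem_rho_graph]
    simp only [mem_univ, true_and, pattern]
  have hsum : ∑ f ∈ patterns, #{r | pattern r = f} = ∑ _f ∈ patterns, (d + 1) := by
    rw [← card_eq_sum_card_fiberwise fun r _ => hpattern r, sum_const, smul_eq_mul, card_univ, hR,
      Fintype.card_piFinset]
    simp only [card_range, prod_coe_sort, mul_comm]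
  have hfiber := (sum_eq_sum_iff_of_le hfiber_ge).1 hsum.symm (pattern r₀) (hpattern r₀)
  calc #(rho A T) ≤ #{r | pattern r = pattern r₀} := card_le_card fun r hr => ?_
    _ = d + 1 := hfiber.symm
  refine mem_filter.2 ⟨mem_univ r, funext fun j => ?_⟩
  obtain ⟨p, hp, hpj⟩ := mem_image.1 (hTB j.2)
  simp only [pattern, ← hpj, mem_rho.1 hr p hp, mem_rho.1 hr₀ p hp]

end Counting

section Detecting

variable {R J : Type*} [Fintype R] [DecidableEq R] [DecidableEq J] {v : J → ℕ} {d t : ℕ}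
  {A : R → J → ℕ}

theorem IsDTA.le_card_image_rho (hA : IsDTA v d t A) (ht : 0 < t) {T : Finset (J × ℕ)}
    (hT : IsInteraction v t T) {c : J} (hc : ∀ p ∈ T, p.1 ≠ c) (hdc : d < v c) :
    d + 1 ≤ #((rho A T).image fun r => A r c) := by
  by_contra! hlt
  have hvalues : (rho A T).image (fun r => A r c) ⊆ range (v c) :=
    image_subset_iff.2 fun r _ => mem_range.2 (hA.1 r c)
  obtain ⟨D, hvD, hD, hDcard⟩ :=
    exists_subsuperset_card_eq hvalues (Nat.lt_succ_iff.1 hlt) (by simpa using hdc.le)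
  obtain ⟨s, rfl⟩ : ∃ s, t = s + 1 := ⟨t - 1, by omega⟩
  obtain ⟨p, hp⟩ := card_pos.1 (hT.1 ▸ ht)
  set swap : ℕ → Finset (J × ℕ) := fun σ => insert (c, σ) (T.erase p)
  have hswap_inj : Function.Injective swap := fun σ τ h => by
    have hσ : (c, σ) ∈ swap τ := h ▸ mem_insert_self _ _
    rcases mem_insert.1 hσ with h' | h'
    · exact (Prod.ext_iff.1 h').2
    · exact absurd rfl (hc _ (mem_of_mem_erase h'))
  have hT_notMem : T ∉ D.image swap := by
    intro hmem
    obtain ⟨σ, -, h⟩ := mem_image.1 hmem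
    exact hc (c, σ) (h ▸ mem_insert_self _ _) rfl
  refine hT_notMem ((hA.2 T hT _ ?_ ?_).1 ?_)
  · rw [card_image_of_injective _ hswap_inj, hDcard]
  · simp only [mem_image, forall_exists_index, and_imp]
    rintro _ σ hσ rfl
    exact (hT.erase hp).insert (fun q hq => hc q (mem_of_mem_erase hq)) (mem_range.1 (hD hσ))
  · intro r hr
    refine mem_rhoSet.2 ⟨swap (A r c), mem_image_of_mem _ (hvD (mem_image_of_mem _ hr)), ?_⟩
    exact mem_rho.2 ((forall_mem_insert _ _ _).2
      ⟨rfl, fun q hq => mem_rho.1 hr q (mem_of_mem_erase hq)⟩)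

theorem IsDTA.isMCA [Fintype J] (hA : IsDTA v d t A) (ht : 0 < t) (htJ : t < Fintype.card J)
    (hdv : ∀ j, d < v j) : IsMCA v (d + 1) t A := by
  refine ⟨hA.1, fun T hT => ?_⟩
  obtain ⟨c, hc⟩ : ∃ c, ∀ p ∈ T, p.1 ≠ c := by
    by_contra! h
    have := card_le_card fun c (_ : c ∈ univ) => mem_image.2 (h c)
    rw [card_univ, hT.2.1] at this
    omega
  exact (hA.le_card_image_rho ht hT hc (hdv c)).trans card_image_le

theorem IsDTA.isSuperSimple [Fintype J] (hA : IsDTA v d t A) (ht : 0 < t)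
    (hJ : Fintype.card J = t + 1) (hdv : ∀ j, d < v j) (c : J)
    (hR : Fintype.card R = (d + 1) * ∏ j ∈ univ.erase c, v j) : IsSuperSimple v t A := by
  intro S hS
  have hcols : S.image Prod.fst = univ := eq_univ_of_card _ (hS.2.1.trans hJ.symm)
  obtain ⟨p, hp, rfl⟩ := mem_image.1 (hcols ▸ mem_univ c)
  have hT : IsInteraction v t (S.erase p) := hS.erase hp
  have hTc : ∀ q ∈ S.erase p, q.1 ≠ p.1 := fun q hq h =>
    ne_of_mem_erase hq (hS.injOn (mem_of_mem_erase hq) hp h)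
  have hTcols : univ.erase p.1 ⊆ (S.erase p).image Prod.fst := fun j hj => by
    obtain ⟨q, hq, rfl⟩ := mem_image.1 (hcols ▸ mem_univ j)
    exact mem_image_of_mem _ (mem_erase.2 ⟨fun h => ne_of_mem_erase hj (h ▸ rfl), hq⟩)
  have hmca : IsMCA v (d + 1) #(univ.erase p.1) A := by
    rw [card_erase_of_mem (mem_univ _), card_univ, hJ, Nat.add_sub_cancel]
    exact hA.isMCA ht (by omega) hdv
  have hle := hmca.card_rho_le_of_subset_image_fst hR hTcols
  have hge := hA.le_card_image_rho ht hT hTc (hdv p.1)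
  rw [← insert_erase hp]
  exact card_rho_insert_le_one (card_image_iff.1 (le_antisymm card_image_le (hle.trans hge)))

end Detecting

theorem stmt_7_general {t d N : ℕ} (ht : 0 < t)
    (v : Fin (t + 1) → ℕ) (hmono : Monotone v) (hdv : d < v 0)
    (hN : N = (d + 1) * ∏ i ∈ Finset.univ.filter (fun i : Fin (t + 1) => (i : ℕ) ≠ 0), v i)
    (A : Fin N → Fin (t + 1) → ℕ) :
    IsDTA v d t A ↔ (IsSuperSimple v t A ∧ IsMCA v (d + 1) t A) := by
  have hdv' : ∀ j, d < v j := fun j => hdv.trans_le (hmono (Fin.zero_le j))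
  have hR : Fintype.card (Fin N) = (d + 1) * ∏ j ∈ univ.erase 0, v j := by
    rw [Fintype.card_fin, hN]
    congr 2
    ext i
    simp only [mem_filter, mem_erase, mem_univ, true_and, and_true, ne_eq, Fin.val_eq_zero_iff]
  exact ⟨fun h => ⟨h.isSuperSimple ht (Fintype.card_fin _) hdv' 0 hR, h.isMCA ht (by simp) hdv'⟩,
    fun ⟨hss, hmca⟩ => hss.isDTA hmca⟩

/-- Theorem: for `k = t+1` and `N = (d+1)·∏_{i=2}^{t+1} v_i`, an
array is an optimum `(d,t)`-DTA meeting the lower bound iff it is a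
super-simple `MCA_{d+1}` of optimum size `N`. -/
theorem stmt_7 {t d N : ℕ} (ht : 0 < t) (hd : 0 < d)
    (v : Fin (t + 1) → ℕ) (hmono : Monotone v) (hv2 : 2 ≤ v 0) (hdv : d < v 0)
    (hN : N = (d + 1) * ∏ i ∈ Finset.univ.filter (fun i : Fin (t + 1) => (i : ℕ) ≠ 0), v i)
    (A : Fin N → Fin (t + 1) → ℕ) (hA : IsArray v A) :
    IsDTA v d t A ↔ (IsSuperSimple v t A ∧ IsMCA v (d + 1) t A) :=
  stmt_7_general ht v hmono hdv hN A
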